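/- (Symmetry of values for an irreducible Gorenstein curve; generalization of Kunz's theorem.) For every fractional ideal I of O and every v ∈ ℤ: v ∈ val(I^∨) if and only if c − v − 1 ∉ val(I). -/

import Mathlib

open scoped Classical

set_option synthInstance.maxHeartbeats 1000000
set_option maxHeartbeats 1000000

noncomputable section

/-- The `t`-adic order of a Laurent series, with `⊤` for the zero series. -/
def valC (g : LaurentSeries ℂ) : WithTop ℤ :=
  if g = 0 then ⊤ else (g.order : WithTop ℤ)

lemma smul_eq_algebraMap_mul1 (c : ℂ) (x : LaurentSeries ℂ) :
    c • x = algebraMap ℂ (LaurentSeries ℂ) c * x := by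
  rw [HahnSeries.algebraMap_apply', PowerSeries.algebraMap_apply,
      Algebra.algebraMap_self, RingHom.id_apply, HahnSeries.ofPowerSeries_C, HahnSeries.C_apply,
      HahnSeries.single_zero_mul_eq_smul]

/-- The set `t^α·O~` of Laurent series whose coefficients in degrees below `α`
vanish (equivalently, of `t`-adic order at least `α`), as a `ℂ`-submodule.
For `α = 0` this is `O~ = ℂ[[t]]` itself. -/
def stdMod1 (α : ℤ) : Submodule ℂ (LaurentSeries ℂ) where
  carrier := {g | ∀ j : ℤ, j < α → g.coeff j = 0}
  add_mem' := by
    intro a b ha hb j hj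
    simp [HahnSeries.coeff_add, ha j hj, hb j hj]
  zero_mem' := by
    intro j hj
    simp
  smul_mem' := by
    intro c a ha j hj
    simp [HahnSeries.coeff_smul, ha j hj]

/-- The dual `S^∨ = {h ∈ K : h·S ⊆ O}` of a subset `S`, as a `ℂ`-submodule. -/
def dualMod1 (O : Subalgebra ℂ (LaurentSeries ℂ)) (S : Set (LaurentSeries ℂ)) :
    Submodule ℂ (LaurentSeries ℂ) where
  carrier := {h | ∀ g ∈ S, h * g ∈ O}
  add_mem' := by
    intro a b ha hb g hg
    simpa [add_mul] using add_mem (ha g hg) (hb g hg)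
  zero_mem' := by
    intro g hg
    simpa using O.zero_mem
  smul_mem' := by
    intro c a ha g hg
    rw [smul_eq_algebraMap_mul1, mul_assoc]
    exact O.mul_mem (O.algebraMap_mem c) (ha g hg)

/-- `val(S)`: the values of the nonzero elements of `S`. -/
def vals1 (S : Set (LaurentSeries ℂ)) : Set ℤ :=
  {v | ∃ g ∈ S, valC g = (v : WithTop ℤ)}

/-- `I` is a fractional ideal of `O`: an `O`-stable `ℂ`-submodule of `K` which
is finitely generated over `O` and contains a nonzero element. -/
def IsFracIdeal1 (O : Subalgebra ℂ (LaurentSeries ℂ))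
    (I : Submodule ℂ (LaurentSeries ℂ)) : Prop :=
  (∀ a ∈ O, ∀ x ∈ I, a * x ∈ I) ∧
  (∃ s : Finset (LaurentSeries ℂ), (↑s : Set (LaurentSeries ℂ)) ⊆ (I : Set (LaurentSeries ℂ)) ∧
    ∀ x ∈ I, ∃ a : LaurentSeries ℂ → LaurentSeries ℂ,
      (∀ g ∈ s, a g ∈ O) ∧ x = ∑ g ∈ s, a g * g) ∧
  (∃ g ∈ I, g ≠ 0)

/-- `dim_ℂ (B / A)`: the dimension of the image of `B` in `K ⧸ A`. -/
def qdim1 (A B : Submodule ℂ (LaurentSeries ℂ)) : ℕ :=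
  Module.finrank ℂ ↥(B.map A.mkQ)


/-!
Put `w = c - v - 1` and compare the fractional ideals `A = I + t^(w+1)·O~ ≤ B = I + t^w·O~`.
The quotient `B / A` is spanned by `t^w`, so it is one-dimensional if `w ∉ val(I)` and zero
otherwise. Duality turns sums into intersections and `(t^α·O~)^∨ = t^(c-α)·O~`, so
`A^∨ = I^∨ ∩ t^v·O~ ≥ B^∨ = I^∨ ∩ t^(v+1)·O~`, and `A^∨ / B^∨` is one-dimensional if
`v ∈ val(I^∨)` and zero otherwise. The Gorenstein equality `dim B/A = dim A^∨/B^∨` compares the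
two. That `A` and `B` are fractional ideals rests on `t^(α+c+1)·O~ ⊆ t^α·O`, so that `t^α·O~`
is generated over `O` by `t^α, …, t^(α+c)`.
-/

open HahnSeries Submodule

local notation "K" => LaurentSeries ℂ

theorem valC_eq_orderTop (g : K) : valC g = g.orderTop := by
  unfold valC
  split_ifs with hg
  · simp [hg]
  · exact order_eq_orderTop_of_ne_zero hg

theorem mem_stdMod1_iff_le_orderTop {α : ℤ} {g : K} :
    g ∈ stdMod1 α ↔ (α : WithTop ℤ) ≤ g.orderTop := by
  rw [le_orderTop_iff_forall]
  simp only [WithTop.coe_lt_coe]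
  rfl

theorem stdMod1_antitone : Antitone stdMod1 :=
  fun _ _ h _ hg j hj => hg j (hj.trans_le h)

theorem single_mem_stdMod1 {α n : ℤ} (h : α ≤ n) (r : ℂ) : (single n r : K) ∈ stdMod1 α := by
  intro j hj
  rw [coeff_single_of_ne (by omega)]

theorem mul_mem_stdMod1 {a b : ℤ} {g h : K} (hg : g ∈ stdMod1 a) (hh : h ∈ stdMod1 b) :
    g * h ∈ stdMod1 (a + b) := by
  rw [mem_stdMod1_iff_le_orderTop] at *
  exact (WithTop.coe_add a b ▸ add_le_add hg hh).trans orderTop_add_le_mul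

theorem mem_stdMod1_add_one_iff {v : ℤ} {g : K} :
    g ∈ stdMod1 (v + 1) ↔ g ∈ stdMod1 v ∧ g.coeff v = 0 := by
  refine ⟨fun h => ⟨stdMod1_antitone (by omega) h, h v (by omega)⟩, fun ⟨h, hv⟩ j hj => ?_⟩
  rcases (Int.lt_add_one_iff.mp hj).lt_or_eq with hj | rfl
  exacts [h j hj, hv]

theorem valC_eq_iff {v : ℤ} {g : K} : valC g = v ↔ g ∈ stdMod1 v ∧ g.coeff v ≠ 0 := by
  rw [valC_eq_orderTop, mem_stdMod1_iff_le_orderTop]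
  exact ⟨fun h => ⟨h.ge, coeff_orderTop_ne h⟩,
    fun ⟨h, hv⟩ => (orderTop_le_of_coeff_ne_zero hv).antisymm h⟩

theorem sub_smul_mem_stdMod1 {v : ℤ} {x g : K} (hx : x ∈ stdMod1 v) (hg : g ∈ stdMod1 v)
    (hgv : g.coeff v ≠ 0) : x - (x.coeff v / g.coeff v) • g ∈ stdMod1 (v + 1) := by
  refine mem_stdMod1_add_one_iff.mpr ⟨sub_mem hx (smul_mem _ _ hg), ?_⟩
  rw [coeff_sub, coeff_smul, smul_eq_mul, div_mul_cancel₀ _ hgv, sub_self]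

theorem stdMod1_eq_sup_span_of_valC_eq {v : ℤ} {g : K} (hg : valC g = v) :
    stdMod1 v = stdMod1 (v + 1) ⊔ ℂ ∙ g := by
  obtain ⟨hgm, hgv⟩ := valC_eq_iff.mp hg
  refine le_antisymm (fun x hx => ?_)
    (sup_le (stdMod1_antitone (by omega)) ((span_singleton_le_iff_mem _ _).mpr hgm))
  rw [← sub_add_cancel x ((x.coeff v / g.coeff v) • g)]
  exact add_mem_sup (sub_smul_mem_stdMod1 hx hgm hgv) (smul_mem _ _ (mem_span_singleton_self g))

theorem valC_single_one (n : ℤ) : valC (single n 1 : K) = n :=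
  valC_eq_iff.mpr ⟨single_mem_stdMod1 le_rfl 1, by simp⟩

theorem qdim1_sup_span_singleton (A : Submodule ℂ K) (x : K) :
    qdim1 A (A ⊔ ℂ ∙ x) = if x ∈ A then 0 else 1 := by
  unfold qdim1
  rw [Submodule.map_sup, mkQ_map_self, bot_sup_eq, map_span, Set.image_singleton]
  split_ifs with hx
  · rw [mkQ_apply, (Quotient.mk_eq_zero A).mpr hx, span_zero_singleton, finrank_bot]
  · exact finrank_span_singleton (by rwa [mkQ_apply, ne_eq, Quotient.mk_eq_zero])

theorem qdim1_self (A : Submodule ℂ K) : qdim1 A A = 0 := by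
  rw [qdim1, mkQ_map_self, finrank_bot]

theorem single_mem_sup_stdMod1_iff (M : Submodule ℂ K) (w : ℤ) :
    single w 1 ∈ M ⊔ stdMod1 (w + 1) ↔ w ∈ vals1 M := by
  constructor
  · intro h
    obtain ⟨x, hx, y, hy, hxy⟩ := mem_sup.mp h
    obtain ⟨hyw, hyv⟩ := mem_stdMod1_add_one_iff.mp hy
    refine ⟨x, hx, valC_eq_iff.mpr ⟨?_, ?_⟩⟩
    · rw [eq_sub_of_add_eq hxy]
      exact sub_mem (single_mem_stdMod1 le_rfl 1) hyw
    · rw [eq_sub_of_add_eq hxy, coeff_sub, hyv, coeff_single_same]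
      exact sub_ne_zero.mpr one_ne_zero
  · rintro ⟨g, hg, hval⟩
    have hw : single w 1 ∈ stdMod1 w := single_mem_stdMod1 le_rfl 1
    rw [stdMod1_eq_sup_span_of_valC_eq hval, sup_comm] at hw
    exact sup_le_sup_right ((span_singleton_le_iff_mem _ _).mpr hg) _ hw

theorem qdim1_sup_stdMod1 (M : Submodule ℂ K) (w : ℤ) :
    qdim1 (M ⊔ stdMod1 (w + 1)) (M ⊔ stdMod1 w) = if w ∈ vals1 M then 0 else 1 := by
  rw [stdMod1_eq_sup_span_of_valC_eq (valC_single_one w), ← sup_assoc, qdim1_sup_span_singleton,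
    single_mem_sup_stdMod1_iff]

theorem qdim1_inf_stdMod1 (M : Submodule ℂ K) (v : ℤ) :
    qdim1 (M ⊓ stdMod1 (v + 1)) (M ⊓ stdMod1 v) = if v ∈ vals1 M then 1 else 0 := by
  split_ifs with hv
  · obtain ⟨g, hg, hval⟩ := hv
    have hgM : ℂ ∙ g ≤ M := (span_singleton_le_iff_mem _ _).mpr hg
    have hsplit : M ⊓ stdMod1 v = M ⊓ stdMod1 (v + 1) ⊔ ℂ ∙ g := by
      rw [stdMod1_eq_sup_span_of_valC_eq hval, inf_comm, sup_comm, sup_inf_assoc_of_le _ hgM,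
        sup_comm, inf_comm]
    rw [hsplit, qdim1_sup_span_singleton, if_neg]
    exact fun h => (valC_eq_iff.mp hval).2 (mem_stdMod1_add_one_iff.mp h.2).2
  · convert qdim1_self (M ⊓ stdMod1 v) using 2
    refine le_antisymm (inf_le_inf_left _ (stdMod1_antitone (by omega)))
      fun x ⟨hxM, hx⟩ => ⟨hxM, mem_stdMod1_add_one_iff.mpr ⟨hx, ?_⟩⟩
    by_contra hxv
    exact hv ⟨x, hxM, valC_eq_iff.mpr ⟨hx, hxv⟩⟩

section Dual

variable {O : Subalgebra ℂ K}

theorem dualMod1_sup (A B : Submodule ℂ K) :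
    dualMod1 O ↑(A ⊔ B) = dualMod1 O A ⊓ dualMod1 O B := by
  refine le_antisymm (le_inf (fun h hh g hg => hh g (mem_sup_left hg))
    (fun h hh g hg => hh g (mem_sup_right hg))) ?_
  rintro h ⟨hA, hB⟩ g hg
  obtain ⟨x, hx, y, hy, rfl⟩ := mem_sup.mp hg
  rw [mul_add]
  exact O.add_mem (hA x hx) (hB y hy)

variable {c : ℕ} (hc : dualMod1 O (stdMod1 0 : Set K) = stdMod1 (c : ℤ))
include hc

theorem mem_of_mem_stdMod1_conductor {g : K} (hg : g ∈ stdMod1 c) : g ∈ O := by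
  rw [← hc] at hg
  simpa using hg 1 (single_mem_stdMod1 le_rfl 1)

theorem dualMod1_stdMod1 (α : ℤ) : dualMod1 O (stdMod1 α : Set K) = stdMod1 (c - α) := by
  refine le_antisymm (fun h hh => ?_) fun h hh g hg =>
    mem_of_mem_stdMod1_conductor hc (by simpa using mul_mem_stdMod1 hh hg)
  have hshift : h * single α 1 ∈ stdMod1 c := by
    rw [← hc]
    intro g hg
    rw [mul_assoc]
    exact hh _ (by simpa using mul_mem_stdMod1 (single_mem_stdMod1 le_rfl 1) hg)
  have hh' : h = h * single α 1 * single (-α) 1 := by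
    rw [mul_assoc, single_mul_single, add_neg_cancel, mul_one, single_zero_one, mul_one]
  rw [hh', sub_eq_add_neg]
  exact mul_mem_stdMod1 hshift (single_mem_stdMod1 le_rfl 1)

theorem dualMod1_sup_stdMod1 (M : Submodule ℂ K) (α : ℤ) :
    dualMod1 O ↑(M ⊔ stdMod1 α) = dualMod1 O M ⊓ stdMod1 (c - α) := by
  rw [dualMod1_sup, dualMod1_stdMod1 hc]

end Dual

def monomialsFrom (α : ℤ) (n : ℕ) : Finset K :=
  (Finset.range n).image fun j : ℕ => single (α + j) 1

theorem monomialsFrom_subset_stdMod1 (α : ℤ) (n : ℕ) :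
    (monomialsFrom α n : Set K) ⊆ stdMod1 α := by
  intro g hg
  obtain ⟨j, -, rfl⟩ := Finset.mem_image.mp hg
  exact single_mem_stdMod1 (by omega) 1

theorem coe_monomialsFrom_succ (α : ℤ) (n : ℕ) :
    (monomialsFrom α (n + 1) : Set K) = insert (single (α + n) 1) (monomialsFrom α n : Set K) := by
  simp [monomialsFrom, Finset.range_add_one, Finset.image_insert]

theorem stdMod1_le_span_monomialsFrom_sup (α : ℤ) (n : ℕ) :
    stdMod1 α ≤ span ℂ (monomialsFrom α n : Set K) ⊔ stdMod1 (α + n) := by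
  induction n with
  | zero => simp
  | succ n ih =>
    refine ih.trans (le_of_eq ?_)
    rw [stdMod1_eq_sup_span_of_valC_eq (valC_single_one (α + n)), coe_monomialsFrom_succ,
      span_insert]
    push_cast
    ac_rfl

section FracIdeal

variable {O : Subalgebra ℂ K}

theorem span_complex_subset_span (s : Set K) : (span ℂ s : Set K) ⊆ span O s := by
  intro x hx
  induction hx using span_induction with
  | mem x hx => exact subset_span hx
  | zero => exact zero_mem _
  | add x y _ _ hx hy => exact add_mem hx hy
  | smul a x _ hx =>
    rw [smul_eq_algebraMap_mul1]
    exact smul_mem _ (algebraMap ℂ O a) hx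

theorem IsFracIdeal1.exists_finset_subset_span {I : Submodule ℂ K} (hI : IsFracIdeal1 O I) :
    ∃ s : Finset K, (s : Set K) ⊆ I ∧ (I : Set K) ⊆ span O (s : Set K) := by
  obtain ⟨s, hsI, hgen⟩ := hI.2.1
  refine ⟨s, hsI, fun x hx => ?_⟩
  obtain ⟨a, ha, rfl⟩ := hgen x hx
  refine sum_mem fun g hg => ?_
  have hsmul : a g * g = (⟨a g, ha g hg⟩ : O) • g := rfl
  rw [hsmul]
  exact smul_mem _ _ (subset_span hg)

theorem isFracIdeal1_of_subset_span {I : Submodule ℂ K} (hstable : ∀ a ∈ O, ∀ x ∈ I, a * x ∈ I)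
    (s : Finset K) (hsI : (s : Set K) ⊆ I) (hIs : (I : Set K) ⊆ span O (s : Set K))
    (hne : ∃ g ∈ I, g ≠ 0) : IsFracIdeal1 O I := by
  refine ⟨hstable, ⟨s, hsI, fun x hx => ?_⟩, hne⟩
  obtain ⟨f, -, hf⟩ := mem_span_finset.mp (hIs hx)
  exact ⟨fun g => f g, fun g _ => (f g).2, hf.symm⟩

theorem stdMod1_subset_span_monomialsFrom {c : ℕ}
    (hc : dualMod1 O (stdMod1 0 : Set K) = stdMod1 (c : ℤ)) (α : ℤ) :
    (stdMod1 α : Set K) ⊆ span O (monomialsFrom α (c + 1) : Set K) := by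
  intro x hx
  obtain ⟨y, hy, g, hg, rfl⟩ := mem_sup.mp (stdMod1_le_span_monomialsFrom_sup α (c + 1) hx)
  refine add_mem (span_complex_subset_span _ hy) ?_
  have hα : single α 1 ∈ monomialsFrom α (c + 1) := Finset.mem_image.mpr ⟨0, by simp, by simp⟩
  have hquot : g * single (-α) 1 ∈ O := by
    refine mem_of_mem_stdMod1_conductor hc (stdMod1_antitone ?_ (mul_mem_stdMod1 hg
      (single_mem_stdMod1 le_rfl 1)))
    push_cast
    omega
  have hg : g = (⟨_, hquot⟩ : O) • single α 1 := by
    rw [Subalgebra.smul_def, smul_eq_mul, mul_assoc, single_mul_single, neg_add_cancel, mul_one,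
      single_zero_one, mul_one]
  rw [hg]
  exact smul_mem _ _ (subset_span hα)

theorem isFracIdeal1_sup_stdMod1 {c : ℕ} (hO : (O : Set K) ⊆ stdMod1 0)
    (hc : dualMod1 O (stdMod1 0 : Set K) = stdMod1 (c : ℤ)) {I : Submodule ℂ K}
    (hI : IsFracIdeal1 O I) (α : ℤ) : IsFracIdeal1 O (I ⊔ stdMod1 α) := by
  obtain ⟨s, hsI, hIs⟩ := hI.exists_finset_subset_span
  refine isFracIdeal1_of_subset_span ?_ (s ∪ monomialsFrom α (c + 1)) ?_ ?_
    ⟨single α 1, mem_sup_right (single_mem_stdMod1 le_rfl 1), single_ne_zero one_ne_zero⟩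
  · intro a ha x hx
    obtain ⟨y, hy, z, hz, rfl⟩ := mem_sup.mp hx
    rw [mul_add]
    exact add_mem_sup (hI.1 a ha y hy) (by simpa using mul_mem_stdMod1 (hO ha) hz)
  · rw [Finset.coe_union]
    exact Set.union_subset (hsI.trans (SetLike.coe_subset_coe.mpr le_sup_left))
      ((monomialsFrom_subset_stdMod1 α _).trans (SetLike.coe_subset_coe.mpr le_sup_right))
  · intro x hx
    obtain ⟨y, hy, z, hz, rfl⟩ := mem_sup.mp hx
    rw [Finset.coe_union, span_union]
    exact add_mem_sup (hIs hy) (stdMod1_subset_span_monomialsFrom hc α hz)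

end FracIdeal

/-- **Symmetry of values for an irreducible Gorenstein curve** (a generalization
of Kunz's theorem): `v ∈ val(I^∨)` iff `c − v − 1 ∉ val(I)`. -/
theorem symmetry_of_values_irreducible (O : Subalgebra ℂ (LaurentSeries ℂ))
    (hO : (O : Set (LaurentSeries ℂ)) ⊆ (stdMod1 0 : Set (LaurentSeries ℂ)))
    (c : ℕ)
    (hc : dualMod1 O (stdMod1 0 : Set (LaurentSeries ℂ)) = stdMod1 (c : ℤ))
    (hG2 : ∀ I J : Submodule ℂ (LaurentSeries ℂ),
      IsFracIdeal1 O I → IsFracIdeal1 O J → I ≤ J →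
      qdim1 I J = qdim1 (dualMod1 O (J : Set (LaurentSeries ℂ)))
        (dualMod1 O (I : Set (LaurentSeries ℂ))))
    (I : Submodule ℂ (LaurentSeries ℂ)) (hI : IsFracIdeal1 O I) (v : ℤ) :
    v ∈ vals1 ((dualMod1 O (I : Set (LaurentSeries ℂ)) :
        Submodule ℂ (LaurentSeries ℂ)) : Set (LaurentSeries ℂ)) ↔
      (c : ℤ) - v - 1 ∉ vals1 (I : Set (LaurentSeries ℂ)) := by
  set w : ℤ := c - v - 1
  have hle : I ⊔ stdMod1 (w + 1) ≤ I ⊔ stdMod1 w :=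
    sup_le_sup_left (stdMod1_antitone (by omega)) I
  have hGor := hG2 _ _ (isFracIdeal1_sup_stdMod1 hO hc hI _)
    (isFracIdeal1_sup_stdMod1 hO hc hI _) hle
  rw [qdim1_sup_stdMod1, dualMod1_sup_stdMod1 hc, dualMod1_sup_stdMod1 hc,
    show (c : ℤ) - (w + 1) = v by omega, show (c : ℤ) - w = v + 1 by omega,
    qdim1_inf_stdMod1] at hGor
  split_ifs at hGor <;> simp_all
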